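/- arXiv:2405.18102 — 6 statements merged into one kernel-verified Lean document; each statement's English description precedes it below -/
import Mathlib

section
/- For every election instance with exactly two parties, there exists a seat assignment that satisfies the obtainable weighted-seat lower quota (WLQ°), i.e., each party p receives total seat weight at least ℓ°(p). -/
open Finset

/-- Total weight of the seats assigned to party `p` under assignment `s`. -/
def rep {m k : ℕ} (w : Fin k → ℕ) (s : Fin k → Fin m) (p : Fin m) : ℕ :=
  ∑ t, if s t = p then w t else 0

/-- The quota of party `p`: total weight times its vote share. -/
def quota {m k : ℕ} (n : ℕ) (v : Fin m → ℕ) (w : Fin k → ℕ) (p : Fin m) : ℚ :=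
  (∑ t, (w t : ℚ)) * (v p : ℚ) / (n : ℚ)

/-- Total weight assigned to party `p` in rounds before round `t`. -/
def gw {m k : ℕ} (w : Fin k → ℕ) (s : Fin k → Fin m) (t : Fin k) (p : Fin m) : ℕ :=
  ∑ t' ∈ Finset.univ.filter (fun t' => t' < t), if s t' = p then w t' else 0

/-!
Give party `0` a heaviest set of seats among those it could claim for `ℓ°(0)` (at most `ℓ#(0)`
seats of weight at most `q(0)`), and party `1` all the other seats. Party `0` then meets its
obtainable lower quota by maximality. Since the quotas sum to at most the total weight `ω`, the
seats left to party `1` weigh at least `ω - q(0) ≥ q(1)`, which bounds every seat set it could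
claim.
-/

lemma rep_eq_sum_filter {m k : ℕ} (w : Fin k → ℕ) (s : Fin k → Fin m) (p : Fin m) :
    rep w s p = ∑ t ∈ univ.filter (fun t => s t = p), w t :=
  (sum_filter _ _).symm

lemma rep_ite_mem {m k : ℕ} (w : Fin k → ℕ) (T : Finset (Fin k)) {a b : Fin m} (hab : a ≠ b) :
    rep w (fun t => if t ∈ T then a else b) a = ∑ t ∈ T, w t := by
  rw [rep_eq_sum_filter]
  congr 1
  ext t
  by_cases ht : t ∈ T <;> simp [ht, hab.symm]

lemma rep_ite_not_mem {m k : ℕ} (w : Fin k → ℕ) (T : Finset (Fin k)) {a b : Fin m} (hab : a ≠ b) :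
    rep w (fun t => if t ∈ T then a else b) b = ∑ t ∈ Tᶜ, w t := by
  rw [rep_eq_sum_filter]
  congr 1
  ext t
  by_cases ht : t ∈ T <;> simp [ht, hab]

/-- The inequality (rather than equality) also covers `n = 0`, where every quota is `0`. -/
lemma sum_quota_le {m k : ℕ} (n : ℕ) (v : Fin m → ℕ) (w : Fin k → ℕ) (hn : ∑ p, v p = n) :
    ∑ p, quota n v w p ≤ ∑ t, (w t : ℚ) := by
  have hv : ∑ p, (v p : ℚ) = n := by exact_mod_cast hn
  simp only [quota, ← sum_div, ← mul_sum, hv]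
  rcases Nat.eq_zero_or_pos n with rfl | hpos
  · simp only [Nat.cast_zero, div_zero]
    positivity
  · rw [mul_div_assoc, div_self (by positivity), mul_one]

lemma sum_le_sum_compl_of_le_quota {k : ℕ} (n : ℕ) (v : Fin 2 → ℕ) (w : Fin k → ℕ)
    (hn : ∑ p, v p = n) {T₀ T : Finset (Fin k)}
    (hT₀ : ((∑ t ∈ T₀, w t : ℕ) : ℚ) ≤ quota n v w 0)
    (hT : ((∑ t ∈ T, w t : ℕ) : ℚ) ≤ quota n v w 1) :
    ∑ t ∈ T, w t ≤ ∑ t ∈ T₀ᶜ, w t := by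
  have hquota := sum_quota_le n v w hn
  have hsplit : ((∑ t ∈ T₀, w t : ℕ) : ℚ) + ((∑ t ∈ T₀ᶜ, w t : ℕ) : ℚ) = ∑ t, (w t : ℚ) := by
    push_cast
    exact sum_add_sum_compl T₀ _
  rw [Fin.sum_univ_two] at hquota
  exact_mod_cast (by linarith : ((∑ t ∈ T, w t : ℕ) : ℚ) ≤ ((∑ t ∈ T₀ᶜ, w t : ℕ) : ℚ))

theorem stmt0_general (n k : ℕ) (v : Fin 2 → ℕ) (w : Fin k → ℕ)
    (hn : ∑ p, v p = n) :
    ∃ s : Fin k → Fin 2, ∀ p : Fin 2, ∀ T : Finset (Fin k),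
      T.card ≤ (k * v p) / n →
      ((∑ t ∈ T, w t : ℕ) : ℚ) ≤ quota n v w p →
      (∑ t ∈ T, w t) ≤ rep w s p := by
  let claimable : Finset (Finset (Fin k)) := univ.filter fun T =>
    T.card ≤ (k * v 0) / n ∧ ((∑ t ∈ T, w t : ℕ) : ℚ) ≤ quota n v w 0
  have hempty : ∅ ∈ claimable :=
    mem_filter.mpr ⟨mem_univ _, by simp, by simp only [sum_empty, Nat.cast_zero, quota]; positivity⟩
  obtain ⟨T₀, hT₀, hT₀max⟩ := claimable.exists_max_image (fun T => ∑ t ∈ T, w t) ⟨∅, hempty⟩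
  refine ⟨fun t => if t ∈ T₀ then 0 else 1, fun p T hcard hq => ?_⟩
  obtain rfl | rfl : p = 0 ∨ p = 1 := by omega
  · rw [rep_ite_mem w T₀ zero_ne_one]
    exact hT₀max T (mem_filter.mpr ⟨mem_univ T, hcard, hq⟩)
  · rw [rep_ite_not_mem w T₀ zero_ne_one]
    exact sum_le_sum_compl_of_le_quota n v w hn (mem_filter.mp hT₀).2.2 hq

/-- For every two-party instance there is a seat assignment satisfying WLQ°:
each party's representation is at least every subset-sum of at most ℓ#(p) seats
whose total weight is at most q(p) (i.e. at least ℓ°(p)). -/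
theorem stmt0 (n k : ℕ) (v : Fin 2 → ℕ) (w : Fin k → ℕ)
    (hv : ∀ p, 1 ≤ v p) (hn : ∑ p, v p = n)
    (hw : ∀ t, 1 ≤ w t) (hmono : ∀ i j : Fin k, i ≤ j → w j ≤ w i) :
    ∃ s : Fin k → Fin 2, ∀ p : Fin 2, ∀ T : Finset (Fin k),
      T.card ≤ (k * v p) / n →
      ((∑ t ∈ T, w t : ℕ) : ℚ) ≤ quota n v w p →
      (∑ t ∈ T, w t) ≤ rep w s p :=
  stmt0_general n k v w hn
end

section
/- The obtainable weighted-seat lower quota WLQ° implies weighted lower quota up to one seat (WLQ-1): if a seat assignment s satisfies rep(p,s) ≥ ℓ°(p) for every party p, then for every party p, either rep(p,s) ≥ q(p), or there exists a seat t not assigned to p with rep(p,s) + w_t > q(p). -/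
/-!
Let `r` be the largest number, at most `ℓ#(p)`, such that the `r` heaviest seats weigh at most
`q(p)`. By WLQ° these seats weigh at most `rep(p,s)`, while adding the next seat overshoots `q(p)`:
by maximality if `r < ℓ#(p)`, and if `r = ℓ#(p)` because, by Chebyshev's sum inequality, the
`ℓ#(p) + 1` heaviest seats weigh at least `(ℓ#(p) + 1) · ω / k > q(p)`. If all of these `r + 1`
seats belong to `p`, then `rep(p,s) > q(p)`; otherwise one of them, `t`, is not `p`'s, and
`w_t ≥ w_r` gives `rep(p,s) + w_t > q(p)`.
-/

open Finset

/-- When the weights are sorted decreasingly, these are the `j` heaviest seats. -/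
def firstSeats (k j : ℕ) : Finset (Fin k) := {i | (i : ℕ) < j}

lemma card_firstSeats {k j : ℕ} (hj : j ≤ k) : #(firstSeats k j) = j := by
  simp [firstSeats, Fin.card_filter_val_lt, hj]

lemma firstSeats_self (k : ℕ) : firstSeats k k = univ := by
  ext i
  simp [firstSeats]

lemma sum_firstSeats_succ {k j : ℕ} (w : Fin k → ℕ) (hj : j < k) :
    ∑ t ∈ firstSeats k (j + 1), w t = ∑ t ∈ firstSeats k j, w t + w ⟨j, hj⟩ := by
  have h : firstSeats k (j + 1) = insert ⟨j, hj⟩ (firstSeats k j) := by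
    ext i
    simp only [firstSeats, mem_filter, mem_univ, true_and, mem_insert, Fin.ext_iff]
    omega
  rw [h, sum_insert (by simp [firstSeats]), add_comm]

lemma Antitone.mul_sum_le_mul_sum_firstSeats {k j : ℕ} {w : Fin k → ℕ} (hw : Antitone w)
    (hj : j ≤ k) : j * ∑ t, w t ≤ k * ∑ t ∈ firstSeats k j, w t := by
  set g : Fin k → ℕ := fun i => if (i : ℕ) < j then 1 else 0
  have hwg : Monovary w g := by
    intro a b hab
    simp only [g] at hab
    split_ifs at hab <;> first | omega | exact hw (Fin.le_def.2 (by omega))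
  have hg : ∑ i, g i = j := by
    rw [sum_boole, Nat.cast_id]
    exact card_firstSeats hj
  have hwg_sum : ∑ i, w i * g i = ∑ t ∈ firstSeats k j, w t := by
    simp only [g, mul_ite, mul_one, mul_zero, ← sum_filter, firstSeats]
  simpa [hg, hwg_sum, mul_comm] using hwg.sum_mul_sum_le_card_mul_sum

lemma Antitone.lt_sum_firstSeats_succ {k L : ℕ} {w : Fin k → ℕ} (hw : Antitone w) {q : ℚ}
    (hq : q * k < (∑ t, (w t : ℚ)) * (L + 1)) (hL : L < k) :
    q < ∑ t ∈ firstSeats k (L + 1), w t := by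
  have hk : (0 : ℚ) < k := by exact_mod_cast Nat.zero_lt_of_lt hL
  have hcheb :
      ((L + 1 : ℕ) : ℚ) * ∑ t, (w t : ℚ) ≤ k * ∑ t ∈ firstSeats k (L + 1), (w t : ℚ) := by
    exact_mod_cast hw.mul_sum_le_mul_sum_firstSeats hL
  push_cast at hcheb ⊢
  exact lt_of_mul_lt_mul_right (by linarith) hk.le

lemma Antitone.exists_sum_firstSeats_le_lt_succ {k L R : ℕ} {w : Fin k → ℕ} (hw : Antitone w)
    {q : ℚ} (hqω : q ≤ ∑ t, (w t : ℚ)) (hq : q * k < (∑ t, (w t : ℚ)) * (L + 1)) (hRq : R < q)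
    (hR : ∀ T : Finset (Fin k), #T ≤ L → ((∑ t ∈ T, w t : ℕ) : ℚ) ≤ q → ∑ t ∈ T, w t ≤ R) :
    ∃ r < k, ∑ t ∈ firstSeats k r, w t ≤ R ∧ q < ∑ t ∈ firstSeats k (r + 1), w t := by
  let P : ℕ → Prop := fun j => ((∑ t ∈ firstSeats k j, w t : ℕ) : ℚ) ≤ q
  set r := Nat.findGreatest P (min L k)
  have hP0 : P 0 := by
    simp only [P, firstSeats, Nat.not_lt_zero, filter_false, sum_empty, Nat.cast_zero]
    exact (Nat.cast_nonneg R).trans hRq.le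
  have hrL : r ≤ min L k := Nat.findGreatest_le _
  have hrR : ∑ t ∈ firstSeats k r, w t ≤ R :=
    hR _ (by rw [card_firstSeats (by omega)]; omega) (Nat.findGreatest_spec (Nat.zero_le _) hP0)
  have hrk : r < k := by
    refine lt_of_le_of_ne (by omega) fun hrk => ?_
    rw [hrk, firstSeats_self] at hrR
    have : ((∑ t, w t : ℕ) : ℚ) ≤ R := by exact_mod_cast hrR
    push_cast at this
    linarith
  refine ⟨r, hrk, hrR, ?_⟩
  rcases hrL.lt_or_eq with hlt | heq
  · exact not_le.1 (Nat.findGreatest_is_greatest (Nat.lt_succ_self r) hlt)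
  · have hrL : r = L := by omega
    rw [hrL] at hrk ⊢
    exact hw.lt_sum_firstSeats_succ hq hrk

lemma sum_le_rep_of_forall {m k : ℕ} (w : Fin k → ℕ) (s : Fin k → Fin m) (p : Fin m)
    {T : Finset (Fin k)} (hT : ∀ t ∈ T, s t = p) : ∑ t ∈ T, w t ≤ rep w s p := by
  rw [rep, ← sum_filter]
  exact sum_le_sum_of_subset fun t ht => mem_filter.2 ⟨mem_univ _, hT t ht⟩

lemma Antitone.sum_firstSeats_succ_le_rep_or_exists {m k r : ℕ} {w : Fin k → ℕ}
    (hw : Antitone w) (s : Fin k → Fin m) (p : Fin m) (hr : r < k)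
    (h : ∑ t ∈ firstSeats k r, w t ≤ rep w s p) :
    ∑ t ∈ firstSeats k (r + 1), w t ≤ rep w s p ∨
      ∃ u, s u ≠ p ∧ ∑ t ∈ firstSeats k (r + 1), w t ≤ rep w s p + w u := by
  by_cases hall : ∀ t ∈ firstSeats k (r + 1), s t = p
  · exact Or.inl (sum_le_rep_of_forall w s p hall)
  push Not at hall
  obtain ⟨u, hu, hsu⟩ := hall
  have hwu : w ⟨r, hr⟩ ≤ w u := hw <| show u.val ≤ r by
    simp only [firstSeats, mem_filter] at hu
    omega
  rw [sum_firstSeats_succ w hr]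
  exact Or.inr ⟨u, hsu, by omega⟩

lemma quota_le_sum {m k n : ℕ} (v : Fin m → ℕ) (w : Fin k → ℕ) {p : Fin m} (hv : v p ≤ n) :
    quota n v w p ≤ ∑ t, (w t : ℚ) := by
  rw [quota, mul_div_assoc]
  exact mul_le_of_le_one_right (by positivity)
    (div_le_one_of_le₀ (by exact_mod_cast hv) (by positivity))

lemma quota_mul_lt {m k n : ℕ} {v : Fin m → ℕ} {w : Fin k → ℕ} {p : Fin m}
    (hq : 0 < quota n v w p) :
    quota n v w p * k < (∑ t, (w t : ℚ)) * ((k * v p / n : ℕ) + 1) := by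
  have hω : 0 < ∑ t, (w t : ℚ) := by
    refine (sum_nonneg fun t _ => Nat.cast_nonneg (w t)).lt_of_ne fun hω => ?_
    rw [quota, ← hω, zero_mul, zero_div] at hq
    exact hq.false
  have hfloor : ((k * v p : ℕ) : ℚ) / n < (k * v p / n : ℕ) + 1 := by
    rw [← Nat.floor_div_eq_div (K := ℚ)]
    exact Nat.lt_floor_add_one _
  calc quota n v w p * k = (∑ t, (w t : ℚ)) * (((k * v p : ℕ) : ℚ) / n) := by
        rw [quota]; push_cast; ring
    _ < _ := mul_lt_mul_of_pos_left hfloor hω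

theorem stmt2_general (n k m : ℕ) (v : Fin m → ℕ) (w : Fin k → ℕ)
    (hn : ∑ p, v p = n)
    (hmono : ∀ i j : Fin k, i ≤ j → w j ≤ w i)
    (s : Fin k → Fin m)
    (hWLQo : ∀ p, ∀ T : Finset (Fin k), T.card ≤ (k * v p) / n →
      ((∑ t ∈ T, w t : ℕ) : ℚ) ≤ quota n v w p → (∑ t ∈ T, w t) ≤ rep w s p) :
    ∀ p : Fin m, quota n v w p ≤ (rep w s p : ℚ) ∨
      ∃ t : Fin k, s t ≠ p ∧ quota n v w p < (rep w s p : ℚ) + (w t : ℚ) := by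
  intro p
  rcases le_or_gt (quota n v w p) (rep w s p) with hq | hq
  · exact Or.inl hq
  have hw : Antitone w := fun i j hij => hmono i j hij
  have hvn : v p ≤ n := hn ▸ single_le_sum (fun _ _ => Nat.zero_le _) (mem_univ p)
  obtain ⟨r, hrk, hrR, hqr⟩ := hw.exists_sum_firstSeats_le_lt_succ (quota_le_sum v w hvn)
    (quota_mul_lt ((Nat.cast_nonneg _).trans_lt hq)) hq (hWLQo p)
  rcases hw.sum_firstSeats_succ_le_rep_or_exists s p hrk hrR with hle | ⟨u, hsu, hle⟩
  · exact absurd hq (not_lt.2 (hqr.le.trans (by exact_mod_cast hle)))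
  · exact Or.inr ⟨u, hsu, hqr.trans_le (by exact_mod_cast hle)⟩

/-- WLQ° implies WLQ-1. -/
theorem stmt2 (n k m : ℕ) (v : Fin m → ℕ) (w : Fin k → ℕ)
    (hv : ∀ p, 1 ≤ v p) (hn : ∑ p, v p = n)
    (hw : ∀ t, 1 ≤ w t) (hmono : ∀ i j : Fin k, i ≤ j → w j ≤ w i)
    (s : Fin k → Fin m)
    (hWLQo : ∀ p, ∀ T : Finset (Fin k), T.card ≤ (k * v p) / n →
      ((∑ t ∈ T, w t : ℕ) : ℚ) ≤ quota n v w p → (∑ t ∈ T, w t) ≤ rep w s p) :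
    ∀ p : Fin m, quota n v w p ≤ (rep w s p : ℚ) ∨
      ∃ t : Fin k, s t ≠ p ∧ quota n v w p < (rep w s p : ℚ) + (w t : ℚ) :=
  stmt2_general n k m v w hn hmono s hWLQo
end

section
/- The Greedy method satisfies WLQ-X-r: for every election instance, for every party p in the returned assignment s, either rep(p,s) ≥ q(p), or for every seat t that was assigned to some party p* ≠ p with rep(p*,s) > q(p*), it holds that rep(p,s) + w_t > q(p). -/
/-
Let `t'` be the last seat won by an over-represented party `p* = s t`. Then
`rep p* = g_{p*}(t') + w_{t'}`, and the greedy choice at round `t'` gives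
`q(p) - g_p(t') ≤ q(p*) - g_{p*}(t') < rep p* - g_{p*}(t') = w_{t'} ≤ w_t`.
Since `g_p(t') ≤ rep p`, this yields `q(p) < rep p + w_t`.
-/

open Finset

/-- A run of the Greedy method: each seat goes to a party maximising q(p) − g_p(t). -/
def GreedyRun {m k : ℕ} (n : ℕ) (v : Fin m → ℕ) (w : Fin k → ℕ) (s : Fin k → Fin m) : Prop :=
  ∀ t : Fin k, ∀ p : Fin m,
    quota n v w p - (gw w s t p : ℚ) ≤ quota n v w (s t) - (gw w s t (s t) : ℚ)

variable {m k : ℕ} {w : Fin k → ℕ} {s : Fin k → Fin m}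

lemma gw_le_rep (t : Fin k) (p : Fin m) : gw w s t p ≤ rep w s p :=
  sum_le_sum_of_subset (filter_subset _ _)

lemma rep_eq_gw_add_of_forall_le {t : Fin k} {p : Fin m} (hst : s t = p)
    (hlast : ∀ u, s u = p → u ≤ t) : rep w s p = gw w s t p + w t := by
  have hrest : ∑ u ∈ univ.filter (fun u => ¬ u < t), (if s u = p then w u else 0) = w t := by
    rw [sum_eq_single_of_mem t (by simp), if_pos hst]
    intro u hu hne
    have hnot : s u ≠ p := fun hsu =>
      (mem_filter.1 hu).2 (lt_of_le_of_ne (hlast u hsu) hne)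
    exact if_neg hnot
  rw [rep, gw, ← sum_filter_add_sum_filter_not univ (· < t), hrest]

lemma exists_last_seat (t : Fin k) :
    ∃ t', s t' = s t ∧ t ≤ t' ∧ ∀ u, s u = s t → u ≤ t' := by
  obtain ⟨t', ht', hmax⟩ := (univ.filter fun u => s u = s t).exists_max_image id ⟨t, by simp⟩
  simp only [mem_filter, mem_univ, true_and, id] at ht' hmax
  exact ⟨t', ht', hmax t rfl, hmax⟩

theorem GreedyRun.quota_lt_rep_add_of_quota_lt_rep {n : ℕ} {v : Fin m → ℕ}
    (hs : GreedyRun n v w s) (hw : Antitone w) (p : Fin m) {t : Fin k}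
    (hover : quota n v w (s t) < rep w s (s t)) :
    quota n v w p < rep w s p + w t := by
  obtain ⟨t', hst', htt', hlast⟩ := exists_last_seat (s := s) t
  have hrep : (rep w s (s t) : ℚ) = gw w s t' (s t) + w t' := by
    exact_mod_cast rep_eq_gw_add_of_forall_le hst' hlast
  have hgreedy := hs t' p
  rw [hst'] at hgreedy
  have hgw : (gw w s t' p : ℚ) ≤ rep w s p := by exact_mod_cast gw_le_rep t' p
  have hwt : (w t' : ℚ) ≤ w t := by exact_mod_cast hw htt'
  linarith

theorem stmt4_general (n k m : ℕ) (v : Fin m → ℕ) (w : Fin k → ℕ)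
    (hmono : ∀ i j : Fin k, i ≤ j → w j ≤ w i)
    (s : Fin k → Fin m) (hs : GreedyRun n v w s) :
    ∀ p : Fin m, quota n v w p ≤ (rep w s p : ℚ) ∨
      ∀ t : Fin k, (s t ≠ p ∧ quota n v w (s t) < (rep w s (s t) : ℚ)) →
        quota n v w p < (rep w s p : ℚ) + (w t : ℚ) :=
  fun p => Or.inr fun _ ⟨_, hover⟩ => hs.quota_lt_rep_add_of_quota_lt_rep hmono p hover

/-- The Greedy method satisfies WLQ-X-r. -/
theorem stmt4 (n k m : ℕ) (v : Fin m → ℕ) (w : Fin k → ℕ)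
    (hv : ∀ p, 1 ≤ v p) (hn : ∑ p, v p = n)
    (hw : ∀ t, 1 ≤ w t) (hmono : ∀ i j : Fin k, i ≤ j → w j ≤ w i)
    (s : Fin k → Fin m) (hs : GreedyRun n v w s) :
    ∀ p : Fin m, quota n v w p ≤ (rep w s p : ℚ) ∨
      ∀ t : Fin k, (s t ≠ p ∧ quota n v w (s t) < (rep w s (s t) : ℚ)) →
        quota n v w p < (rep w s p : ℚ) + (w t : ℚ) :=
  stmt4_general n k m v w hmono s hs
end

section
/- The weighted Adams method can fail WLQ-1: with four parties with votes (9, 1, 1, 1) and four unit-weight seats, Adams_ω assigns exactly one seat to each party, so party 1 receives representation 1 while q(1) = 3, and adding any single remaining seat (weight 1) does not bring party 1 above its quota. -/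
open Finset

/-- A run of weighted Adams: seat t goes to a party maximising v_p / g_p(t),
where the ratio is ∞ whenever g_p(t) = 0. -/
def AdamsRun {m k : ℕ} (v : Fin m → ℕ) (w : Fin k → ℕ) (s : Fin k → Fin m) : Prop :=
  ∀ t : Fin k, ∀ p : Fin m,
    gw w s t (s t) = 0 ∨
      (gw w s t p ≠ 0 ∧
        (v p : ℚ) / (gw w s t p : ℚ) ≤ (v (s t) : ℚ) / (gw w s t (s t) : ℚ))

/-! With no more seats than parties, before every round some party is still unseated, so its
ratio is ∞ and Adams never hands out a second seat. With four parties and four unit seats every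
party therefore gets exactly one seat, and party 1 stays at 1 + 1 < 3 even with an extra seat. -/

section AdamsRun

variable {m k : ℕ} {v : Fin m → ℕ} {w : Fin k → ℕ} {s : Fin k → Fin m}

lemma gw_pos_of_lt {t₁ t₂ : Fin k} (hw : 0 < w t₁) (hlt : t₁ < t₂) :
    0 < gw w s t₂ (s t₁) :=
  lt_of_lt_of_le (by simpa using hw) <|
    single_le_sum (f := fun t' => if s t' = s t₁ then w t' else 0) (a := t₁)
      (fun _ _ => Nat.zero_le _) (by simpa using hlt)

lemma exists_gw_eq_zero (t : Fin k) (ht : (t : ℕ) < m) : ∃ p, gw w s t p = 0 := by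
  have hcard : #((univ.filter (· < t)).image s) < #(univ : Finset (Fin m)) := by
    calc #((univ.filter (· < t)).image s) ≤ #(univ.filter (· < t)) := card_image_le
      _ = t := by rw [filter_gt_eq_Iio, Fin.card_Iio]
      _ < #(univ : Finset (Fin m)) := by simpa using ht
  obtain ⟨p, -, hp⟩ := exists_mem_notMem_of_card_lt_card hcard
  refine ⟨p, sum_eq_zero fun t' ht' => if_neg fun hs => hp ?_⟩
  exact mem_image.mpr ⟨t', ht', hs⟩

lemma AdamsRun.injective (hrun : AdamsRun v w s) (hw : ∀ t, 0 < w t) (hkm : k ≤ m) :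
    Function.Injective s := by
  suffices ∀ t₁ t₂, t₁ < t₂ → s t₁ ≠ s t₂ by
    intro t₁ t₂ heq
    rcases lt_trichotomy t₁ t₂ with hlt | h | hlt
    exacts [absurd heq (this _ _ hlt), h, absurd heq.symm (this _ _ hlt)]
  intro t₁ t₂ hlt heq
  obtain ⟨p, hp⟩ := exists_gw_eq_zero (s := s) t₂ (by omega)
  rcases hrun t₂ p with hself | ⟨hp', -⟩
  · exact (gw_pos_of_lt (s := s) (hw t₁) hlt).ne' (heq ▸ hself)
  · exact hp' hp

lemma rep_apply_of_injective (hs : Function.Injective s) (t : Fin k) : rep w s (s t) = w t := by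
  simp only [rep, hs.eq_iff, sum_ite_eq', mem_univ, if_true]

end AdamsRun

/-- Weighted Adams fails WLQ-1: with votes (9,1,1,1) and four unit seats it gives
every party exactly one seat, and party 1 (quota 3) cannot reach its quota with
one extra seat. -/
theorem stmt7 :
    ∀ s : Fin 4 → Fin 4, AdamsRun ![9,1,1,1] ![1,1,1,1] s →
      (∀ p, rep ![1,1,1,1] s p = 1) ∧
      ¬ (∀ p : Fin 4, quota 12 ![9,1,1,1] ![1,1,1,1] p ≤ (rep ![1,1,1,1] s p : ℚ) ∨
          ∃ t : Fin 4, s t ≠ p ∧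
            quota 12 ![9,1,1,1] ![1,1,1,1] p <
              (rep ![1,1,1,1] s p : ℚ) + ((![1,1,1,1] : Fin 4 → ℕ) t : ℚ)) := by
  intro s hrun
  have hunit : ∀ t : Fin 4, (![1,1,1,1] : Fin 4 → ℕ) t = 1 := by decide
  have hbij : Function.Bijective s :=
    Finite.injective_iff_bijective.mp (hrun.injective (by simp [hunit]) le_rfl)
  have hrep : ∀ p, rep ![1,1,1,1] s p = 1 := fun p => by
    obtain ⟨t, rfl⟩ := hbij.surjective p
    rw [rep_apply_of_injective hbij.injective, hunit]
  have hquota : quota 12 ![9,1,1,1] ![1,1,1,1] 0 = 3 := by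
    norm_num [quota, Fin.sum_univ_four, hunit]
  refine ⟨hrep, fun hwlq => ?_⟩
  rcases hwlq 0 with hle | ⟨t, -, hlt⟩
  · rw [hquota, hrep] at hle
    norm_num at hle
  · rw [hquota, hrep, hunit] at hlt
    norm_num at hlt
end

section
/- Weighted envy-freeness up to any seat (WEFX) implies weighted upper quota up to any seat (WUQ-X): if a complete seat assignment s satisfies, for all parties p_x, p_y and every seat t assigned to p_y, rep(p_x,s)/v_{p_x} ≥ (rep(p_y,s) − w_t)/v_{p_y}, then for every party p, either rep(p,s) ≤ q(p), or for every seat t assigned to p, rep(p,s) − w_t < q(p). -/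
open Finset

/- If `a p` exceeds its proportional share `(∑ a) * v p / ∑ v`, the others share less than
their proportion of the rest; so a ratio `b / v p` that bounds every other `a x / v x` from below
must stay below `(∑ a) / ∑ v`. -/
theorem lt_sum_mul_div_sum_of_div_mul_le {ι K : Type*} [Fintype ι] [DecidableEq ι] [Field K]
    [LinearOrder K] [IsStrictOrderedRing K] {a v : ι → K} {p : ι} {b : K}
    (hv : ∀ x, 0 ≤ v x) (hvp : 0 < v p) (hle : ∀ x ≠ p, b / v p * v x ≤ a x)
    (hp : (∑ x, a x) * v p / ∑ x, v x < a p) :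
    b < (∑ x, a x) * v p / ∑ x, v x := by
  set A := ∑ x, a x
  set V := ∑ x, v x
  have hV : 0 < V := hvp.trans_le (single_le_sum (fun x _ => hv x) (mem_univ p))
  by_contra! hb
  have hratio : A / V ≤ b / v p := by
    rw [div_le_div_iff₀ hV hvp]
    exact (div_le_iff₀ hV).mp hb
  have hrest : A / V * (V - v p) ≤ A - a p :=
    calc A / V * (V - v p) = ∑ x ∈ univ.erase p, A / V * v x := by
          rw [← mul_sum, sum_erase_eq_sub (mem_univ p)]
      _ ≤ ∑ x ∈ univ.erase p, b / v p * v x :=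
          sum_le_sum fun x _ => mul_le_mul_of_nonneg_right hratio (hv x)
      _ ≤ ∑ x ∈ univ.erase p, a x := sum_le_sum fun x hx => hle x (ne_of_mem_erase hx)
      _ = A - a p := sum_erase_eq_sub (mem_univ p)
  have hexpand : A / V * (V - v p) = A - A * v p / V := by
    field_simp
  linarith

theorem sum_rep {m k : ℕ} (w : Fin k → ℕ) (s : Fin k → Fin m) :
    ∑ p, rep w s p = ∑ t, w t := by
  unfold rep
  rw [sum_comm]
  exact sum_congr rfl fun t _ => by simp

theorem quota_eq_sum_rep_mul_div_sum {m k n : ℕ} {v : Fin m → ℕ} (hn : ∑ p, v p = n)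
    (w : Fin k → ℕ) (s : Fin k → Fin m) (p : Fin m) :
    quota n v w p = (∑ x, (rep w s x : ℚ)) * v p / ∑ x, (v x : ℚ) := by
  simp only [quota, ← Nat.cast_sum, sum_rep, hn]

theorem stmt8_general (n k m : ℕ) (v : Fin m → ℕ) (w : Fin k → ℕ)
    (hv : ∀ p, 1 ≤ v p) (hn : ∑ p, v p = n)
    (s : Fin k → Fin m)
    (hWEFX : ∀ px py : Fin m, ∀ t : Fin k, s t = py →
      ((rep w s py : ℚ) - (w t : ℚ)) / (v py : ℚ) ≤ (rep w s px : ℚ) / (v px : ℚ)) :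
    ∀ p : Fin m, (rep w s p : ℚ) ≤ quota n v w p ∨
      ∀ t : Fin k, s t = p → (rep w s p : ℚ) - (w t : ℚ) < quota n v w p := by
  intro p
  refine or_iff_not_imp_left.2 fun hover t ht => ?_
  have hpos : ∀ x, (0 : ℚ) < v x := fun x => by exact_mod_cast hv x
  rw [quota_eq_sum_rep_mul_div_sum hn w s] at hover ⊢
  exact lt_sum_mul_div_sum_of_div_mul_le (fun x => (hpos x).le) (hpos p)
    (fun x _ => (le_div_iff₀ (hpos x)).mp (hWEFX x p t ht)) (not_le.mp hover)

/-- WEFX implies WUQ-X. -/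
theorem stmt8 (n k m : ℕ) (v : Fin m → ℕ) (w : Fin k → ℕ)
    (hm : 2 ≤ m) (hv : ∀ p, 1 ≤ v p) (hn : ∑ p, v p = n) (hw : ∀ t, 1 ≤ w t)
    (s : Fin k → Fin m)
    (hWEFX : ∀ px py : Fin m, ∀ t : Fin k, s t = py →
      ((rep w s py : ℚ) - (w t : ℚ)) / (v py : ℚ) ≤ (rep w s px : ℚ) / (v px : ℚ)) :
    ∀ p : Fin m, (rep w s p : ℚ) ≤ quota n v w p ∨
      ∀ t : Fin k, s t = p → (rep w s p : ℚ) - (w t : ℚ) < quota n v w p :=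
  stmt8_general n k m v w hv hn s hWEFX
end

section
/- The Greedy method satisfies WUQ-X: in any assignment s it produces, for every party p, either rep(p,s) ≤ q(p), or for every seat t assigned to p, rep(p,s) − w_t < q(p). -/
open Finset

section Apportionment

variable {m k : ℕ}

lemma rep_eq_gw_add_of_last (w : Fin k → ℕ) {s : Fin k → Fin m} {p : Fin m} {T : Fin k}
    (hT : s T = p) (hlast : ∀ t, s t = p → t ≤ T) :
    rep w s p = gw w s T p + w T := by
  rw [rep, gw, ← sum_filter_add_sum_filter_not univ (· < T),
    sum_eq_single_of_mem (s := univ.filter fun t => ¬t < T) T (by simp) ?_, if_pos hT]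
  intro t ht htT
  rw [mem_filter, not_lt] at ht
  exact if_neg fun h => htT (le_antisymm (hlast t h) ht.2)

lemma sum_gw (w : Fin k → ℕ) (s : Fin k → Fin m) (T : Fin k) :
    ∑ p, gw w s T p = ∑ t ∈ univ.filter (· < T), w t := by
  simp only [gw]
  rw [sum_comm]
  simp

lemma sum_quota {n : ℕ} {v : Fin m → ℕ} (w : Fin k → ℕ) (hn : ∑ p, v p = n) (hn0 : n ≠ 0) :
    ∑ p, quota n v w p = ∑ t, (w t : ℚ) := by
  have hv : ∑ p, (v p : ℚ) = n := by exact_mod_cast hn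
  simp only [quota]
  rw [← sum_div, ← mul_sum, hv, mul_div_cancel_right₀ _ (Nat.cast_ne_zero.mpr hn0)]

lemma sum_filter_lt_add_le_sum (w : Fin k → ℕ) (T : Fin k) :
    ∑ t ∈ univ.filter (· < T), w t + w T ≤ ∑ t, w t := by
  rw [add_comm, ← sum_insert (by simp)]
  exact sum_le_sum_of_subset (subset_univ _)

theorem GreedyRun.weight_le_card_mul_slack {n : ℕ} {v : Fin m → ℕ} {w : Fin k → ℕ}
    {s : Fin k → Fin m} (hs : GreedyRun n v w s) (hn : ∑ p, v p = n) (hn0 : n ≠ 0)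
    (T : Fin k) :
    (w T : ℚ) ≤ m * (quota n v w (s T) - gw w s T (s T)) := by
  calc (w T : ℚ)
    _ ≤ ∑ t, (w t : ℚ) - ∑ t ∈ univ.filter (· < T), (w t : ℚ) := by
      rw [le_sub_iff_add_le']
      exact_mod_cast sum_filter_lt_add_le_sum w T
    _ = ∑ p, (quota n v w p - gw w s T p) := by
      have hgw : ∑ p, (gw w s T p : ℚ) = ∑ t ∈ univ.filter (· < T), (w t : ℚ) := by
        exact_mod_cast sum_gw w s T
      rw [sum_sub_distrib, sum_quota w hn hn0, hgw]
    _ ≤ ∑ _p : Fin m, (quota n v w (s T) - gw w s T (s T)) := sum_le_sum fun p _ => hs T p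
    _ = m * (quota n v w (s T) - gw w s T (s T)) := by simp [mul_sub]

end Apportionment

theorem stmt11_general (n k m : ℕ) (v : Fin m → ℕ) (w : Fin k → ℕ)
    (hv : ∀ p, 1 ≤ v p) (hn : ∑ p, v p = n)
    (hmono : ∀ i j : Fin k, i ≤ j → w j ≤ w i)
    (s : Fin k → Fin m) (hs : GreedyRun n v w s) :
    ∀ p : Fin m, (rep w s p : ℚ) ≤ quota n v w p ∨
      ∀ t : Fin k, s t = p → (rep w s p : ℚ) - (w t : ℚ) < quota n v w p := by
  intro p
  by_cases hseat : ∃ t, s t = p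
  swap
  · exact Or.inr fun t ht => (hseat ⟨t, ht⟩).elim
  obtain ⟨t₀, ht₀⟩ := hseat
  obtain ⟨T, hT, hlast⟩ := (univ.filter (s · = p)).exists_max_image id ⟨t₀, by simp [ht₀]⟩
  simp only [mem_filter, mem_univ, true_and, id] at hT hlast
  have hn0 : n ≠ 0 := by
    rw [← hn]
    exact (sum_pos (fun q _ => hv q) ⟨p, mem_univ p⟩).ne'
  have hslack := hs.weight_le_card_mul_slack hn hn0 T
  have hrep : (rep w s p : ℚ) = gw w s T p + w T := by
    exact_mod_cast rep_eq_gw_add_of_last w hT hlast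
  have hm : (0 : ℚ) < m := by exact_mod_cast p.pos
  rw [hT] at hslack
  rcases (w T).eq_zero_or_pos with hwT | hwT
  · left
    rw [hwT, Nat.cast_zero] at hslack hrep
    have := (mul_nonneg_iff_of_pos_left hm).mp hslack
    linarith
  · right
    intro t ht
    have hwt : (w T : ℚ) ≤ w t := by exact_mod_cast hmono t T (hlast t ht)
    have := (mul_pos_iff_of_pos_left hm).mp (lt_of_lt_of_le (by exact_mod_cast hwT) hslack)
    linarith

/-- The Greedy method satisfies WUQ-X. -/
theorem stmt11 (n k m : ℕ) (v : Fin m → ℕ) (w : Fin k → ℕ)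
    (hv : ∀ p, 1 ≤ v p) (hn : ∑ p, v p = n)
    (hw : ∀ t, 1 ≤ w t) (hmono : ∀ i j : Fin k, i ≤ j → w j ≤ w i)
    (s : Fin k → Fin m) (hs : GreedyRun n v w s) :
    ∀ p : Fin m, (rep w s p : ℚ) ≤ quota n v w p ∨
      ∀ t : Fin k, s t = p → (rep w s p : ℚ) - (w t : ℚ) < quota n v w p :=
  stmt11_general n k m v w hv hn hmono s hs
end
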